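/- Fix an integer n ≥ 1, a mass m > 0, and an adiabatic exponent γ with 1 < γ < (n+2)/n; let M[N,u] be the truncated Maxwellian and h the kinetic entropy. Then for every N ≥ 0 and every u ∈ ℝⁿ, ∫_{ℝⁿ} h(M[N,u](v), v) dv = (m/2) N |u|² + m^{n(γ−1)/2} N^{γ}/(γ−1). -/

import Mathlib

open MeasureTheory

/-- The exponent `d = 2/(γ−1) − n`. -/
noncomputable def dExp (n : ℕ) (γ : ℝ) : ℝ := 2 / (γ - 1) - n

/-- The normalization constant
`c = (2γ/(γ−1))^{−1/(γ−1)} Γ(γ/(γ−1)) / (π^{n/2} Γ(d/2 + 1))`. -/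
noncomputable def cNorm (n : ℕ) (γ : ℝ) : ℝ :=
  (2 * γ / (γ - 1)) ^ (-(1 / (γ - 1))) * Real.Gamma (γ / (γ - 1)) /
    (Real.pi ^ ((n : ℝ) / 2) * Real.Gamma (dExp n γ / 2 + 1))

/-- The truncated Maxwellian
`M[N,u](v) = c (m^{n(γ−1)/2} (2γ/(γ−1)) N^{γ−1} − m|v−u|²)₊^{d/2}`. -/
noncomputable def maxwellian (n : ℕ) (m γ : ℝ) (N : ℝ) (u v : EuclideanSpace ℝ (Fin n)) : ℝ :=
  cNorm n γ *
    (max (m ^ ((n : ℝ) * (γ - 1) / 2) * (2 * γ / (γ - 1)) * N ^ (γ - 1)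
        - m * ‖v - u‖ ^ 2) 0) ^ (dExp n γ / 2)

/-- The kinetic entropy `h(g,v) = (m/2)|v|² g + (1/(2 c^{2/d})) g^{1+2/d}/(1+2/d)`. -/
noncomputable def kinEntropy (n : ℕ) (m γ : ℝ) (g : ℝ) (v : EuclideanSpace ℝ (Fin n)) : ℝ :=
  m / 2 * ‖v‖ ^ 2 * g +
    1 / (2 * cNorm n γ ^ (2 / dExp n γ)) * (g ^ (1 + 2 / dExp n γ) / (1 + 2 / dExp n γ))

/-!
Write `M[N,u](v) = c q(v - u)^{d/2}` with `q(w) = (A - m|w|²)₊` and `A = maxwellianLevel`.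
Everything reduces to the integrals `I(s) = ∫ q^s`, which polar coordinates and the substitution
`r² = t` turn into Beta integrals: `I(s) = m^{-n/2} A^{n/2+s} π^{n/2} Γ(s+1) / Γ(n/2+s+1)`.
Hence `c I(d/2) = N` and `I(d/2+1) = A (d/2+1) (γ-1)/γ · I(d/2)`, since `n/2 + d/2 + 1 = γ/(γ-1)`.
After the translation `v = w + u`, the cross term `⟪w, u⟫` integrates to zero by symmetry, and
the pointwise identity `m|w|² q^p = A q^p - q^{p+1}` (with `p = d/2`) disposes of the second
moment. The entropy is therefore `(N/2)(m|u|² + A/γ)`, and `N A / (2γ) = m^{n(γ-1)/2} N^γ / (γ-1)`.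
-/

open Set Module

lemma integral_rpow_mul_one_sub_rpow {s t : ℝ} (hs : 0 < s) (ht : 0 < t) :
    ∫ x in (0 : ℝ)..1, x ^ (s - 1) * (1 - x) ^ (t - 1) =
      Real.Gamma s * Real.Gamma t / Real.Gamma (s + t) := by
  have h := Complex.betaIntegral_eq_Gamma_mul_div s t (by simpa) (by simpa)
  rw [← Complex.ofReal_add, Complex.Gamma_ofReal, Complex.Gamma_ofReal, Complex.Gamma_ofReal,
    Complex.betaIntegral] at h
  apply Complex.ofReal_injective
  push_cast
  rw [← h, ← intervalIntegral.integral_ofReal]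
  refine intervalIntegral.integral_congr fun x hx => ?_
  rw [uIcc_of_le zero_le_one] at hx
  push_cast
  rw [Complex.ofReal_cpow hx.1, Complex.ofReal_cpow (sub_nonneg.2 hx.2)]
  push_cast
  ring

lemma integral_Ioi_pow_mul_max_one_sub_sq_rpow (k : ℕ) {p : ℝ} (hp : 0 < p) :
    ∫ r in Ioi (0 : ℝ), r ^ k * max (1 - r ^ 2) 0 ^ p =
      Real.Gamma ((k + 1) / 2) * Real.Gamma (p + 1) / (2 * Real.Gamma ((k + 1) / 2 + (p + 1))) := by
  set s : ℝ := (k + 1) / 2 with hs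
  have hsub : ∀ x ∈ Ioi (0 : ℝ), ((1 / 2 : ℝ) * x ^ ((1 / 2 : ℝ) - 1)) •
      ((x ^ (1 / 2 : ℝ)) ^ k * max (1 - (x ^ (1 / 2 : ℝ)) ^ 2) 0 ^ p) =
      (1 / 2) * (x ^ (s - 1) * max (1 - x) 0 ^ p) := by
    intro x hx
    have hx : 0 < x := hx
    have hsqrt : (x ^ (1 / 2 : ℝ)) ^ 2 = x := by
      rw [← Real.sqrt_eq_rpow, Real.sq_sqrt hx.le]
    have hpow : x ^ ((1 / 2 : ℝ) - 1) * (x ^ (1 / 2 : ℝ)) ^ k = x ^ (s - 1) := by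
      rw [← Real.rpow_natCast, ← Real.rpow_mul hx.le, ← Real.rpow_add hx, hs]
      ring_nf
    rw [hsqrt, smul_eq_mul, ← hpow]
    ring
  have hvanish : ∀ x ∈ Ioi (0 : ℝ) \ Ioo 0 1, (1 / 2) * (x ^ (s - 1) * max (1 - x) 0 ^ p) = 0 := by
    intro x ⟨hx0, hx1⟩
    have : 1 ≤ x := not_lt.1 fun h => hx1 ⟨hx0, h⟩
    rw [max_eq_right (by linarith), Real.zero_rpow hp.ne']
    ring
  rw [← integral_comp_rpow_Ioi_of_pos (by norm_num : (0 : ℝ) < 1 / 2),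
    setIntegral_congr_fun measurableSet_Ioi hsub,
    setIntegral_eq_of_subset_of_forall_sdiff_eq_zero measurableSet_Ioi Ioo_subset_Ioi_self hvanish,
    setIntegral_congr_fun measurableSet_Ioo
      (fun x hx => by rw [max_eq_left (sub_nonneg.2 hx.2.le)]),
    integral_const_mul, ← integral_Ioc_eq_integral_Ioo,
    ← intervalIntegral.integral_of_le zero_le_one]
  have hβ := integral_rpow_mul_one_sub_rpow (s := s) (t := p + 1) (by positivity) (by linarith)
  rw [add_sub_cancel_right] at hβ
  rw [hβ]
  ring

lemma continuous_max_sub_mul_norm_sq_rpow {E : Type*} [SeminormedAddCommGroup E] {A m p : ℝ}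
    (hp : 0 ≤ p) :
    Continuous fun x : E => max (A - m * ‖x‖ ^ 2) 0 ^ p :=
  (Real.continuous_rpow_const hp).comp (by fun_prop)

lemma hasCompactSupport_max_sub_mul_norm_sq_rpow {E : Type*} [NormedAddCommGroup E] [ProperSpace E]
    {A m p : ℝ} (hm : 0 < m) (hp : 0 < p) :
    HasCompactSupport fun x : E => max (A - m * ‖x‖ ^ 2) 0 ^ p := by
  refine HasCompactSupport.intro (isCompact_closedBall 0 √(A / m)) fun x hx => ?_
  rw [Metric.mem_closedBall, dist_zero_right, not_le] at hx
  have : A ≤ m * ‖x‖ ^ 2 := by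
    have := Real.lt_sq_of_sqrt_lt hx
    rw [div_lt_iff₀ hm] at this
    linarith
  rw [max_eq_right (by linarith), Real.zero_rpow hp.ne']

section TruncatedParabola

variable {E : Type*} [NormedAddCommGroup E] [InnerProductSpace ℝ E] [FiniteDimensional ℝ E]
  [MeasurableSpace E] [BorelSpace E] [Nontrivial E]

lemma integral_max_one_sub_norm_sq_rpow {p : ℝ} (hp : 0 < p) :
    ∫ x : E, max (1 - ‖x‖ ^ 2) 0 ^ p =
      Real.pi ^ (finrank ℝ E / 2 : ℝ) * Real.Gamma (p + 1) /
        Real.Gamma (finrank ℝ E / 2 + (p + 1)) := by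
  have hn : (0 : ℝ) < finrank ℝ E := Nat.cast_pos.2 finrank_pos
  have hk : ((finrank ℝ E - 1 : ℕ) : ℝ) + 1 = finrank ℝ E := by
    rw [Nat.cast_sub finrank_pos, Nat.cast_one, sub_add_cancel]
  have hball : volume.real (Metric.ball (0 : E) 1) =
      Real.pi ^ (finrank ℝ E / 2 : ℝ) / (finrank ℝ E / 2 * Real.Gamma (finrank ℝ E / 2)) := by
    rw [measureReal_def, InnerProductSpace.volume_ball, ENNReal.ofReal_one, one_pow, one_mul,
      ENNReal.toReal_ofReal (by positivity), Real.sqrt_eq_rpow, ← Real.rpow_natCast,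
      ← Real.rpow_mul Real.pi_pos.le, Real.Gamma_add_one (by positivity)]
    ring_nf
  have hΓ : Real.Gamma (finrank ℝ E / 2) ≠ 0 := (Real.Gamma_pos_of_pos (by positivity)).ne'
  rw [integral_fun_norm_addHaar volume (fun y => max (1 - y ^ 2) 0 ^ p), hball]
  simp only [smul_eq_mul, nsmul_eq_mul]
  rw [integral_Ioi_pow_mul_max_one_sub_sq_rpow _ hp, hk]
  field_simp

lemma integral_max_sub_mul_norm_sq_rpow {A m p : ℝ} (hA : 0 ≤ A) (hm : 0 < m)
    (hp : 0 < p) :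
    ∫ x : E, max (A - m * ‖x‖ ^ 2) 0 ^ p =
      m ^ (-(finrank ℝ E / 2 : ℝ)) * A ^ (finrank ℝ E / 2 + p : ℝ) *
        (Real.pi ^ (finrank ℝ E / 2 : ℝ) * Real.Gamma (p + 1) /
          Real.Gamma (finrank ℝ E / 2 + (p + 1))) := by
  rcases hA.eq_or_lt with rfl | hA
  · have hzero : ∀ x : E, max (0 - m * ‖x‖ ^ 2) 0 ^ p = 0 := fun x => by
      rw [max_eq_right (by nlinarith [sq_nonneg ‖x‖]), Real.zero_rpow hp.ne']
    rw [integral_congr_ae (ae_of_all _ hzero), integral_zero,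
      Real.zero_rpow (by positivity), mul_zero, zero_mul]
  set R := √(A / m) with hR_def
  have hR : 0 < R := Real.sqrt_pos.2 (div_pos hA hm)
  have hscale : ∀ x : E, max (A - m * ‖R • x‖ ^ 2) 0 ^ p = A ^ p * max (1 - ‖x‖ ^ 2) 0 ^ p := by
    intro x
    rw [norm_smul, mul_pow, Real.norm_of_nonneg hR.le, Real.sq_sqrt (div_pos hA hm).le,
      ← Real.mul_rpow hA.le (le_max_right _ _), mul_max_of_nonneg _ _ hA.le, mul_zero]
    congr 2
    field_simp
  have hRn : R ^ finrank ℝ E = m ^ (-(finrank ℝ E / 2 : ℝ)) * A ^ (finrank ℝ E / 2 : ℝ) := by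
    rw [hR_def, ← Real.rpow_natCast, Real.sqrt_eq_rpow, ← Real.rpow_mul (div_pos hA hm).le,
      Real.div_rpow hA.le hm.le, Real.rpow_neg hm.le]
    ring_nf
  have h := Measure.integral_comp_smul_of_nonneg volume
    (fun x : E => max (A - m * ‖x‖ ^ 2) 0 ^ p) R (hR := hR.le)
  simp only [hscale, integral_const_mul, smul_eq_mul] at h
  rw [eq_inv_mul_iff_mul_eq₀ (by positivity)] at h
  rw [← h, integral_max_one_sub_norm_sq_rpow hp, hRn, Real.rpow_add hA]
  ring

lemma integral_max_sub_mul_norm_sq_rpow_add_one {A m p : ℝ} (hA : 0 ≤ A)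
    (hm : 0 < m) (hp : 0 < p) :
    ∫ x : E, max (A - m * ‖x‖ ^ 2) 0 ^ (p + 1) =
      A * (p + 1) / (finrank ℝ E / 2 + (p + 1)) * ∫ x : E, max (A - m * ‖x‖ ^ 2) 0 ^ p := by
  have hn : (0 : ℝ) < finrank ℝ E / 2 + (p + 1) := by positivity
  rw [integral_max_sub_mul_norm_sq_rpow hA hm hp,
    integral_max_sub_mul_norm_sq_rpow hA hm (by positivity),
    ← add_assoc, Real.rpow_add_one' hA (by positivity), ← add_assoc (finrank ℝ E / 2 : ℝ),
    Real.Gamma_add_one (by positivity), Real.Gamma_add_one hn.ne']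
  field_simp
  ring_nf

end TruncatedParabola

lemma integral_inner_mul_fun_norm_eq_zero {E : Type*} [NormedAddCommGroup E] [InnerProductSpace ℝ E]
    [MeasurableSpace E] [MeasurableNeg E] (μ : Measure E) [μ.IsNegInvariant] (g : ℝ → ℝ) (u : E) :
    ∫ x, inner ℝ x u * g ‖x‖ ∂μ = 0 := by
  have h := integral_neg_eq_self (fun x => inner ℝ x u * g ‖x‖) μ
  simp only [inner_neg_left, norm_neg, neg_mul, integral_neg] at h
  linarith

lemma mul_max_sub_rpow {a b p : ℝ} (hp : 0 < p) :
    b * max (a - b) 0 ^ p = a * max (a - b) 0 ^ p - max (a - b) 0 ^ (p + 1) := by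
  rcases le_or_gt (a - b) 0 with h | h
  · rw [max_eq_right h, Real.zero_rpow hp.ne', Real.zero_rpow (by positivity)]
    ring
  · rw [max_eq_left h.le, Real.rpow_add_one h.ne']
    ring

section Maxwellian

variable {n : ℕ} {m γ : ℝ}

noncomputable def maxwellianLevel (n : ℕ) (m γ N : ℝ) : ℝ :=
  m ^ ((n : ℝ) * (γ - 1) / 2) * (2 * γ / (γ - 1)) * N ^ (γ - 1)

lemma maxwellian_eq (N : ℝ) (u v : EuclideanSpace ℝ (Fin n)) :
    maxwellian n m γ N u v =
      cNorm n γ * max (maxwellianLevel n m γ N - m * ‖v - u‖ ^ 2) 0 ^ (dExp n γ / 2) :=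
  rfl

lemma dExp_pos (hn : 1 ≤ n) (hγ1 : 1 < γ) (hγ2 : γ < ((n : ℝ) + 2) / n) : 0 < dExp n γ := by
  rw [lt_div_iff₀ (by exact_mod_cast hn)] at hγ2
  rw [dExp, sub_pos, lt_div_iff₀ (by linarith)]
  linarith

lemma cNorm_pos (hγ1 : 1 < γ) (hd : 0 < dExp n γ) : 0 < cNorm n γ := by
  unfold cNorm
  positivity

lemma half_add_dExp_div_two (hγ : γ ≠ 1) : (n : ℝ) / 2 + dExp n γ / 2 = 1 / (γ - 1) := by
  rw [dExp]
  field_simp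
  ring

lemma half_add_dExp_div_two_add_one (hγ : γ ≠ 1) :
    (n : ℝ) / 2 + (dExp n γ / 2 + 1) = γ / (γ - 1) := by
  rw [← add_assoc, half_add_dExp_div_two hγ]
  field_simp
  ring

lemma maxwellianLevel_nonneg (hm : 0 ≤ m) (hγ1 : 1 < γ) {N : ℝ} (hN : 0 ≤ N) :
    0 ≤ maxwellianLevel n m γ N := by
  unfold maxwellianLevel
  positivity

lemma maxwellianLevel_rpow (hm : 0 < m) (hγ1 : 1 < γ) {N : ℝ} (hN : 0 ≤ N) :
    maxwellianLevel n m γ N ^ (1 / (γ - 1)) =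
      m ^ ((n : ℝ) / 2) * (2 * γ / (γ - 1)) ^ (1 / (γ - 1)) * N := by
  have hγ : γ - 1 ≠ 0 := by linarith
  have hB : 0 < 2 * γ / (γ - 1) := div_pos (by linarith) (by linarith)
  rw [maxwellianLevel, Real.mul_rpow (by positivity) (by positivity),
    Real.mul_rpow (by positivity) hB.le, ← Real.rpow_mul hm.le, ← Real.rpow_mul hN,
    mul_one_div_cancel hγ, Real.rpow_one]
  congr 3
  field_simp

lemma mul_maxwellianLevel (hγ1 : 1 < γ) {N : ℝ} (hN : 0 ≤ N) :
    N * maxwellianLevel n m γ N = 2 * γ / (γ - 1) * m ^ ((n : ℝ) * (γ - 1) / 2) * N ^ γ := by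
  have hNγ : N ^ γ = N * N ^ (γ - 1) := by
    rw [← Real.rpow_one_add' hN (by linarith), add_sub_cancel]
  rw [maxwellianLevel, hNγ]
  ring

/-- This is the normalisation `cNorm` is made for: `∫ M[N,u] = N`. -/
lemma cNorm_mul_integral_max_maxwellianLevel_sub_rpow [NeZero n] (hm : 0 < m) (hγ1 : 1 < γ)
    (hd : 0 < dExp n γ) {N : ℝ} (hN : 0 ≤ N) :
    cNorm n γ * ∫ w : EuclideanSpace ℝ (Fin n),
      max (maxwellianLevel n m γ N - m * ‖w‖ ^ 2) 0 ^ (dExp n γ / 2) = N := by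
  have hB : 0 < 2 * γ / (γ - 1) := div_pos (by linarith) (by linarith)
  have hΓ : 0 < Real.Gamma (γ / (γ - 1)) :=
    Real.Gamma_pos_of_pos (div_pos (by linarith) (by linarith))
  have hexp := half_add_dExp_div_two (n := n) hγ1.ne'
  have hexp' := half_add_dExp_div_two_add_one (n := n) hγ1.ne'
  rw [integral_max_sub_mul_norm_sq_rpow (maxwellianLevel_nonneg hm.le hγ1 hN) hm (by positivity),
    finrank_euclideanSpace_fin, hexp, hexp', maxwellianLevel_rpow hm hγ1 hN, cNorm,
    Real.rpow_neg hB.le, Real.rpow_neg hm.le]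
  field_simp

lemma kinEntropy_cNorm_mul_rpow (hγ1 : 1 < γ) (hd : 0 < dExp n γ) {q : ℝ} (hq : 0 ≤ q)
    (v : EuclideanSpace ℝ (Fin n)) :
    kinEntropy n m γ (cNorm n γ * q ^ (dExp n γ / 2)) v =
      cNorm n γ / 2 * (m * ‖v‖ ^ 2 * q ^ (dExp n γ / 2) +
        (1 - 1 / (dExp n γ / 2 + 1)) * q ^ (dExp n γ / 2 + 1)) := by
  have hc := cNorm_pos hγ1 hd
  have hpow : (cNorm n γ * q ^ (dExp n γ / 2)) ^ (1 + 2 / dExp n γ) =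
      cNorm n γ * cNorm n γ ^ (2 / dExp n γ) * q ^ (dExp n γ / 2 + 1) := by
    rw [Real.mul_rpow hc.le (by positivity), ← Real.rpow_mul hq,
      Real.rpow_one_add' hc.le (by positivity)]
    congr 2
    field_simp
  rw [kinEntropy, hpow]
  field_simp
  ring

lemma kinEntropy_maxwellian_add (hγ1 : 1 < γ) (hd : 0 < dExp n γ) (N : ℝ)
    (u w : EuclideanSpace ℝ (Fin n)) :
    kinEntropy n m γ (maxwellian n m γ N u (w + u)) (w + u) =
      cNorm n γ / 2 *
        ((maxwellianLevel n m γ N + m * ‖u‖ ^ 2) *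
            max (maxwellianLevel n m γ N - m * ‖w‖ ^ 2) 0 ^ (dExp n γ / 2) -
          max (maxwellianLevel n m γ N - m * ‖w‖ ^ 2) 0 ^ (dExp n γ / 2 + 1) / (dExp n γ / 2 + 1) +
          2 * m * (inner ℝ w u *
            max (maxwellianLevel n m γ N - m * ‖w‖ ^ 2) 0 ^ (dExp n γ / 2))) := by
  have hmoment := mul_max_sub_rpow (a := maxwellianLevel n m γ N) (b := m * ‖w‖ ^ 2)
    (p := dExp n γ / 2) (by positivity)
  rw [maxwellian_eq, add_sub_cancel_right, kinEntropy_cNorm_mul_rpow hγ1 hd (le_max_right _ _),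
    norm_add_sq_real]
  linear_combination cNorm n γ / 2 * hmoment

lemma integral_kinEntropy_maxwellian (hm : 0 < m) (hγ1 : 1 < γ) (hd : 0 < dExp n γ) (N : ℝ)
    (u : EuclideanSpace ℝ (Fin n)) :
    ∫ v, kinEntropy n m γ (maxwellian n m γ N u v) v =
      cNorm n γ / 2 * ((maxwellianLevel n m γ N + m * ‖u‖ ^ 2) *
          (∫ w : EuclideanSpace ℝ (Fin n),
            max (maxwellianLevel n m γ N - m * ‖w‖ ^ 2) 0 ^ (dExp n γ / 2)) -
        (∫ w : EuclideanSpace ℝ (Fin n),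
            max (maxwellianLevel n m γ N - m * ‖w‖ ^ 2) 0 ^ (dExp n γ / 2 + 1)) /
          (dExp n γ / 2 + 1)) := by
  rw [← integral_add_right_eq_self _ u]
  simp only [kinEntropy_maxwellian_add hγ1 hd]
  set A := maxwellianLevel n m γ N
  set p := dExp n γ / 2
  have hp : 0 < p := by positivity
  have hint : ∀ s : ℝ, 0 < s →
      Integrable fun w : EuclideanSpace ℝ (Fin n) => max (A - m * ‖w‖ ^ 2) 0 ^ s := fun s hs =>
    (continuous_max_sub_mul_norm_sq_rpow hs.le).integrable_of_hasCompactSupport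
      (hasCompactSupport_max_sub_mul_norm_sq_rpow hm hs)
  have hint_inner :
      Integrable fun w : EuclideanSpace ℝ (Fin n) => inner ℝ w u * max (A - m * ‖w‖ ^ 2) 0 ^ p :=
    ((continuous_id.inner continuous_const).mul
      (continuous_max_sub_mul_norm_sq_rpow hp.le)).integrable_of_hasCompactSupport
      (hasCompactSupport_max_sub_mul_norm_sq_rpow hm hp).mul_left
  have hodd : ∫ w : EuclideanSpace ℝ (Fin n), inner ℝ w u * max (A - m * ‖w‖ ^ 2) 0 ^ p = 0 :=
    integral_inner_mul_fun_norm_eq_zero volume (fun r => max (A - m * r ^ 2) 0 ^ p) u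
  have hint_lower := (hint p hp).const_mul (A + m * ‖u‖ ^ 2)
  have hint_upper := (hint (p + 1) (by positivity)).div_const (p + 1)
  rw [integral_const_mul, integral_add (hint_lower.sub' hint_upper) (hint_inner.const_mul _),
    integral_sub hint_lower hint_upper, integral_const_mul, integral_const_mul, integral_div, hodd,
    mul_zero, add_zero]

end Maxwellian

theorem maxwellian_entropy (n : ℕ) (hn : 1 ≤ n) (m γ : ℝ) (hm : 0 < m)
    (hγ1 : 1 < γ) (hγ2 : γ < ((n : ℝ) + 2) / n) (N : ℝ) (hN : 0 ≤ N)
    (u : EuclideanSpace ℝ (Fin n)) :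
    (∫ v : EuclideanSpace ℝ (Fin n), kinEntropy n m γ (maxwellian n m γ N u v) v) =
      m / 2 * N * ‖u‖ ^ 2 + m ^ ((n : ℝ) * (γ - 1) / 2) * N ^ γ / (γ - 1) := by
  have : NeZero n := ⟨by omega⟩
  have hd := dExp_pos hn hγ1 hγ2
  have hmass := cNorm_mul_integral_max_maxwellianLevel_sub_rpow hm hγ1 hd hN
  have hnext := integral_max_sub_mul_norm_sq_rpow_add_one (E := EuclideanSpace ℝ (Fin n))
    (maxwellianLevel_nonneg (n := n) hm.le hγ1 hN) hm (p := dExp n γ / 2) (by positivity)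
  rw [finrank_euclideanSpace_fin, half_add_dExp_div_two_add_one hγ1.ne'] at hnext
  have hlevel := mul_maxwellianLevel (n := n) (m := m) hγ1 hN
  rw [integral_kinEntropy_maxwellian hm hγ1 hd N u, hnext]
  have : γ - 1 ≠ 0 := by linarith
  field_simp at hlevel ⊢
  linear_combination (γ - 1) * (γ * (maxwellianLevel n m γ N + m * ‖u‖ ^ 2) -
    maxwellianLevel n m γ N * (γ - 1)) * hmass + hlevel
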